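/- Gradient of the smoothed robust value function: suppose Θ ⊆ ℝ^N is open and for all s, a the map θ ↦ π_θ(a|s) is differentiable on Θ. Then for every σ > 0 and every s ∈ S, the map θ ↦ V_σ^{π_θ}(s) is differentiable, and ∇_θ V_σ^{π_θ}(s) = B(s,θ) + (γR/(1−γ)) · (Σ_{s'∈S} e^{σ·V_σ^{π_θ}(s')}·B(s',θ)) / (Σ_{s'∈S} e^{σ·V_σ^{π_θ}(s')}). -/

import Mathlib

set_option autoImplicit false

open Finset

/-- Log-sum-exp: `LSE(σ, V) = (1/σ)·log (∑ s, exp (σ · V s))`. -/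
noncomputable def lse {S : Type*} [Fintype S] (σ : ℝ) (V : S → ℝ) : ℝ :=
  (1 / σ) * Real.log (∑ s, Real.exp (σ * V s))

/-- The stochastic matrix of a policy `π` under the kernel `p`:
`P_π(s,s') = ∑ a, π(a|s)·p(s'|s,a)`. -/
noncomputable def pmat {S A : Type*} [Fintype A] (π : S → A → ℝ) (p : S → A → S → ℝ) :
    Matrix S S ℝ :=
  Matrix.of fun s s' => ∑ a, π s a * p s a s'

/-- The discounted visitation distribution
`d^π_s(s') = (1-γ+γR)·∑_{t≥0} (γ(1-R))^t·(P_π^t)(s,s')`. -/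
noncomputable def dvisit {S A : Type*} [Fintype S] [Fintype A] [DecidableEq S]
    (γ R : ℝ) (π : S → A → ℝ) (p : S → A → S → ℝ) (s s' : S) : ℝ :=
  (1 - γ + γ * R) * ∑' t : ℕ, (γ * (1 - R)) ^ t * ((pmat π p) ^ t) s s'

/-!
Fix `θ ∈ Θ`. The value `V θ` is the fixed point of the Bellman operator `T θ`, which is a
`γ`-contraction for every `θ ∈ Θ`. This alone gives `V θ' - V θ = O(θ' - θ)`, and then the error `e`
of the linearisation of `V` at `θ` satisfies `e - L e = o(θ' - θ)`, where `L` is the derivative of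
`T θ` in `V`; since `‖L‖ ≤ γ < 1`, `e = o(θ' - θ)`. So pointwise differentiability of the policy
suffices, and the derivative `V'` solves `V' = K + L V'`, where `K = ∑ₐ ∇π(a|·) Q(·,a)` is the
derivative of `θ' ↦ T θ' (V θ)`.

Here `L = γ(1-R) P_π + γR · ⟨softmax (σ V), ·⟩`. The visitation matrix is
`(1-γ+γR) (1 - γ(1-R) P_π)⁻¹` (Neumann series), so `B` solves `B = K + γ(1-R) P_π B`. Since `P_π`
and the softmax average both fix constants, adding the constant `γR/(1-γ) · ⟨softmax (σ V), B⟩`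
to `B` absorbs the rank-one part of `L`.
-/

open Asymptotics Filter Topology

section FixedPoint

variable {E F : Type*} [NormedAddCommGroup E] [NormedAddCommGroup F]
  {T : E → F → F} {f : E → F} {x₀ : E} {γ : NNReal}

lemma isBigO_sub_of_isFixedPt {G : Type*} [Norm G] {g : E → G} (hγ : γ < 1)
    (hfix : ∀ᶠ x in 𝓝 x₀, Function.IsFixedPt (T x) (f x))
    (hLip : ∀ᶠ x in 𝓝 x₀, LipschitzWith γ (T x))
    (hT : (fun x => T x (f x₀) - T x₀ (f x₀)) =O[𝓝 x₀] g) :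
    (fun x => f x - f x₀) =O[𝓝 x₀] g := by
  refine IsBigO.trans (IsBigO.of_bound (1 - γ : ℝ)⁻¹ ?_) hT
  have hγ' : (0 : ℝ) < 1 - γ := sub_pos.2 (NNReal.coe_lt_one.2 hγ)
  filter_upwards [hfix, hLip] with x hx hLx
  have hsplit : f x - f x₀ = (T x (f x) - T x (f x₀)) + (T x (f x₀) - T x₀ (f x₀)) := by
    rw [hfix.self_of_nhds.eq, hx.eq]; abel
  have : ‖f x - f x₀‖ ≤ γ * ‖f x - f x₀‖ + ‖T x (f x₀) - T x₀ (f x₀)‖ := by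
    calc ‖f x - f x₀‖ ≤ ‖T x (f x) - T x (f x₀)‖ + ‖T x (f x₀) - T x₀ (f x₀)‖ := by
          rw [hsplit]; exact norm_add_le _ _
      _ ≤ _ := by gcongr; exact hLx.norm_sub_le _ _
  rw [le_inv_mul_iff₀ hγ']
  linarith

variable [NormedSpace ℝ E] [NormedSpace ℝ F]

lemma norm_le_inv_one_sub_mul_norm_sub_apply {L : F →L[ℝ] F} (hL : ‖L‖ ≤ γ) (hγ : γ < 1)
    (v : F) : ‖v‖ ≤ (1 - γ : ℝ)⁻¹ * ‖v - L v‖ := by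
  rw [le_inv_mul_iff₀ (sub_pos.2 (NNReal.coe_lt_one.2 hγ))]
  have h1 : ‖L v‖ ≤ γ * ‖v‖ := (L.le_opNorm v).trans (by gcongr)
  have h2 := norm_sub_norm_le v (L v)
  linarith

theorem hasFDerivAt_of_isFixedPt {K f' : E →L[ℝ] F} {L : F →L[ℝ] F} {ε : E → ℝ} (hγ : γ < 1)
    (hfix : ∀ᶠ x in 𝓝 x₀, Function.IsFixedPt (T x) (f x))
    (hLip : ∀ᶠ x in 𝓝 x₀, LipschitzWith γ (T x))
    (hK : HasFDerivAt (fun x => T x (f x₀)) K x₀)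
    (hL : HasFDerivAt (T x₀) L (f x₀))
    (hε : Tendsto ε (𝓝 x₀) (𝓝 0))
    (hcross : ∀ᶠ x in 𝓝 x₀, ∀ V W, ‖T x V - T x₀ V - (T x W - T x₀ W)‖ ≤ ε x * ‖V - W‖)
    (hf' : ∀ v, f' v = K v + L (f' v)) :
    HasFDerivAt f f' x₀ := by
  have hΔ := isBigO_sub_of_isFixedPt hγ hfix hLip hK.isBigO_sub
  have hf : Tendsto f (𝓝 x₀) (𝓝 (f x₀)) := by
    rw [← tendsto_sub_nhds_zero_iff]
    exact hΔ.trans_tendsto (tendsto_sub_nhds_zero_iff.2 tendsto_id)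
  have hcross_o : (fun x => T x (f x) - T x₀ (f x) - (T x (f x₀) - T x₀ (f x₀)))
      =o[𝓝 x₀] (fun x => x - x₀) := by
    have hεΔ : (fun x => ε x * ‖f x - f x₀‖) =o[𝓝 x₀] (fun x => x - x₀) := by
      have := ((isLittleO_one_iff ℝ).2 hε).mul_isBigO hΔ.norm_left.norm_right
      simpa using this
    refine IsBigO.trans_isLittleO (IsBigO.of_bound 1 ?_) hεΔ
    filter_upwards [hcross] with x hx
    rw [one_mul, Real.norm_eq_abs]
    exact (hx _ _).trans (le_abs_self _)
  have hlin : (fun x => T x₀ (f x) - T x₀ (f x₀) - L (f x - f x₀))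
      =o[𝓝 x₀] (fun x => x - x₀) :=
    (hL.isLittleO.comp_tendsto hf).trans_isBigO hΔ
  have herr : (fun x => (f x - f x₀ - f' (x - x₀)) - L (f x - f x₀ - f' (x - x₀)))
      =o[𝓝 x₀] (fun x => x - x₀) := by
    refine ((hcross_o.add hlin).add hK.isLittleO).congr' ?_ EventuallyEq.rfl
    filter_upwards [hfix] with x hx
    have hKf' : K (x - x₀) = f' (x - x₀) - L (f' (x - x₀)) :=
      eq_sub_iff_add_eq.2 (hf' _).symm
    rw [hx.eq, hfix.self_of_nhds.eq, hKf']
    simp only [map_sub]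
    abel
  have hLnorm : ‖L‖ ≤ γ := hL.le_of_lipschitz hLip.self_of_nhds
  refine HasFDerivAt.of_isLittleO (IsBigO.trans_isLittleO ?_ herr)
  exact IsBigO.of_bound _ (Eventually.of_forall fun x =>
    norm_le_inv_one_sub_mul_norm_sub_apply hLnorm hγ _)

end FixedPoint

lemma abs_sum_mul_le_of_mem_stdSimplex {ι : Type*} [Fintype ι] {w : ι → ℝ}
    (hw : w ∈ stdSimplex ℝ ι) {v : ι → ℝ} {C : ℝ} (hv : ∀ i, |v i| ≤ C) :
    |∑ i, w i * v i| ≤ C := by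
  calc |∑ i, w i * v i| ≤ ∑ i, w i * C := by
        refine (abs_sum_le_sum_abs _ _).trans (sum_le_sum fun i _ => ?_)
        rw [abs_mul, abs_of_nonneg (hw.1 i)]
        exact mul_le_mul_of_nonneg_left (hv i) (hw.1 i)
    _ = C := by rw [← sum_mul, hw.2, one_mul]

noncomputable def softmax {S : Type*} [Fintype S] (σ : ℝ) (V : S → ℝ) (s : S) : ℝ :=
  (∑ s', Real.exp (σ * V s'))⁻¹ * Real.exp (σ * V s)

section LogSumExp

variable {S : Type*} [Fintype S] [Nonempty S] {σ : ℝ}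

lemma lse_add_const (hσ : σ ≠ 0) (V : S → ℝ) (k : ℝ) :
    lse σ (fun s => V s + k) = lse σ V + k := by
  have hZ : 0 < ∑ s, Real.exp (σ * V s) := sum_pos (fun _ _ => Real.exp_pos _) univ_nonempty
  simp only [lse, mul_add, Real.exp_add, ← sum_mul]
  rw [Real.log_mul hZ.ne' (Real.exp_pos _).ne', Real.log_exp]
  field_simp

lemma lse_mono (hσ : 0 < σ) {V W : S → ℝ} (h : V ≤ W) : lse σ V ≤ lse σ W := by
  have hZ : 0 < ∑ s, Real.exp (σ * V s) := sum_pos (fun _ _ => Real.exp_pos _) univ_nonempty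
  unfold lse
  gcongr
  exact h _

lemma lipschitzWith_lse (hσ : 0 < σ) : LipschitzWith 1 (lse (S := S) σ) :=
  LipschitzWith.of_le_add fun V W =>
    calc lse σ V ≤ lse σ (fun s => W s + dist V W) :=
          lse_mono hσ fun s => by
            have := dist_le_pi_dist V W s
            rw [Real.dist_eq] at this
            linarith [le_abs_self (V s - W s)]
      _ = lse σ W + dist V W := lse_add_const hσ.ne' W _

lemma sum_softmax (V : S → ℝ) : ∑ s, softmax σ V s = 1 := by
  simp only [softmax, ← mul_sum]
  exact inv_mul_cancel₀ (sum_pos (fun _ _ => Real.exp_pos _) univ_nonempty).ne'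

lemma hasFDerivAt_lse (hσ : σ ≠ 0) (V : S → ℝ) :
    HasFDerivAt (lse σ)
      (∑ s, softmax σ V s • (ContinuousLinearMap.proj s : (S → ℝ) →L[ℝ] ℝ)) V := by
  have hZ : ∑ s, Real.exp (σ * V s) ≠ 0 :=
    (sum_pos (fun _ _ => Real.exp_pos _) univ_nonempty).ne'
  have hsum : HasFDerivAt (fun W : S → ℝ => ∑ s, Real.exp (σ * W s))
      (∑ s, (Real.exp (σ * V s) * σ) • (ContinuousLinearMap.proj s : (S → ℝ) →L[ℝ] ℝ)) V :=
    HasFDerivAt.fun_sum fun s _ => by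
      simpa [smul_smul] using ((hasFDerivAt_apply s V).const_mul σ).exp
  refine ((hsum.log hZ).const_mul (1 / σ)).congr_fderiv ?_
  simp only [softmax, smul_sum, smul_smul]
  congr 1 with s
  field_simp

end LogSumExp

section Neumann

variable {S : Type*} [Fintype S] [DecidableEq S]

attribute [local instance] Matrix.linftyOpNormedRing Matrix.linftyOpNormedAlgebra

lemma one_sub_smul_mul_tsum_pow {P : Matrix S S ℝ} (hP : ∀ s, ∑ s', |P s s'| ≤ 1)
    {β : ℝ} (hβ : |β| < 1) :
    (1 - β • P) * Matrix.of (fun s s' => ∑' t : ℕ, β ^ t * (P ^ t) s s') = 1 := by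
  have hnorm : ‖β • P‖ < 1 := by
    refine (norm_smul_le β P).trans_lt ?_
    have hP1 : ‖P‖ ≤ 1 := by
      rw [Matrix.linfty_opNorm_def, ← NNReal.coe_one, NNReal.coe_le_coe]
      refine Finset.sup_le fun s _ => ?_
      rw [← NNReal.coe_le_coe]
      simpa [Real.norm_eq_abs] using hP s
    calc ‖β‖ * ‖P‖ ≤ ‖β‖ * 1 := by gcongr
      _ < 1 := by rwa [mul_one, Real.norm_eq_abs]
  have hsum := summable_geometric_of_norm_lt_one hnorm
  have htsum : Matrix.of (fun s s' => ∑' t : ℕ, β ^ t * (P ^ t) s s') = ∑' t : ℕ, (β • P) ^ t := by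
    ext s s'
    have h1 := congrFun (tsum_apply hsum (x := s)) s'
    have h2 := tsum_apply (Pi.summable.1 hsum s) (x := s')
    refine Eq.trans ?_ (h1.trans h2).symm
    simp [smul_pow]
  rw [htsum]
  exact hsum.one_sub_mul_tsum_pow

end Neumann

open Matrix RealInnerProductSpace

section Visitation

variable {S A : Type*} [Fintype S] [Fintype A] {π : S → A → ℝ} {p : S → A → S → ℝ}

lemma pmat_apply_nonneg (hπ : ∀ s, π s ∈ stdSimplex ℝ A) (hp : ∀ s a, p s a ∈ stdSimplex ℝ S)
    (s s' : S) : 0 ≤ pmat π p s s' :=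
  sum_nonneg fun a _ => mul_nonneg ((hπ s).1 a) ((hp s a).1 s')

lemma sum_pmat_apply (hπ : ∀ s, π s ∈ stdSimplex ℝ A) (hp : ∀ s a, p s a ∈ stdSimplex ℝ S)
    (s : S) : ∑ s', pmat π p s s' = 1 := by
  simp only [pmat, Matrix.of_apply]
  rw [sum_comm]
  simp only [← mul_sum, (hp s _).2, mul_one, (hπ s).2]

variable [DecidableEq S]

lemma one_sub_smul_pmat_mul_dvisit (hπ : ∀ s, π s ∈ stdSimplex ℝ A)
    (hp : ∀ s a, p s a ∈ stdSimplex ℝ S) {γ R : ℝ} (hβ : |γ * (1 - R)| < 1) :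
    (1 - (γ * (1 - R)) • pmat π p) * Matrix.of (dvisit γ R π p)
      = (1 - γ + γ * R) • (1 : Matrix S S ℝ) := by
  have hd : Matrix.of (dvisit γ R π p) = (1 - γ + γ * R) •
      Matrix.of (fun s s' => ∑' t : ℕ, (γ * (1 - R)) ^ t * (pmat π p ^ t) s s') := by
    ext; rfl
  have hP : ∀ s, ∑ s', |pmat π p s s'| ≤ 1 := fun s => by
    simp only [abs_of_nonneg (pmat_apply_nonneg hπ hp s _), sum_pmat_apply hπ hp, le_refl]
  rw [hd, Matrix.mul_smul, one_sub_smul_mul_tsum_pow hP hβ]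

lemma inner_eq_add_mulVec_of_eq_dvisit {E : Type*} [NormedAddCommGroup E]
    [InnerProductSpace ℝ E] (hπ : ∀ s, π s ∈ stdSimplex ℝ A)
    (hp : ∀ s a, p s a ∈ stdSimplex ℝ S) {γ R : ℝ} (hβ : |γ * (1 - R)| < 1)
    {q : S → A → ℝ} {D : S → A → E} {B : S → E}
    (hB : ∀ s, B s = (1 / (1 - γ + γ * R)) • ∑ s', ∑ a, (dvisit γ R π p s s' * q s' a) • D s' a)
    (u : E) (s : S) :
    ⟪B s, u⟫ = ∑ a, q s a * ⟪D s a, u⟫ + γ * (1 - R) * (pmat π p *ᵥ fun s' => ⟪B s', u⟫) s := by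
  have hc : 1 - γ + γ * R ≠ 0 := by
    linarith [le_abs_self (γ * (1 - R))]
  set g : S → ℝ := fun s => ∑ a, q s a * ⟪D s a, u⟫
  have hb : (fun s => ⟪B s, u⟫) = (1 - γ + γ * R)⁻¹ • (Matrix.of (dvisit γ R π p) *ᵥ g) := by
    funext s
    simp only [hB, g, one_div, real_inner_smul_left, sum_inner, mulVec, dotProduct, mul_sum,
      Matrix.of_apply, Pi.smul_apply, smul_eq_mul]
    exact sum_congr rfl fun _ _ => sum_congr rfl fun _ _ => by ring
  have hsolve : (1 - (γ * (1 - R)) • pmat π p) *ᵥ (fun s => ⟪B s, u⟫) = g := by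
    rw [hb, mulVec_smul, mulVec_mulVec, one_sub_smul_pmat_mul_dvisit hπ hp hβ, smul_mulVec,
      one_mulVec, smul_smul, inv_mul_cancel₀ hc, one_smul]
  have hs := congrFun hsolve s
  simp only [sub_mulVec, one_mulVec, smul_mulVec, Pi.sub_apply, Pi.smul_apply, smul_eq_mul] at hs
  linarith

end Visitation

section RankOneUpdate

variable {S : Type*} [Fintype S]

lemma eq_add_mulVec_add_dotProduct {P : Matrix S S ℝ} (hP : ∀ s, ∑ s', P s s' = 1)
    {w : S → ℝ} (hw : ∑ s, w s = 1) {β ρ : ℝ} (hβρ : β + ρ ≠ 1) {g b x : S → ℝ}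
    (hb : ∀ s, b s = g s + β * (P *ᵥ b) s) (hx : ∀ s, x s = b s + ρ / (1 - β - ρ) * (w ⬝ᵥ b))
    (s : S) : x s = g s + β * (P *ᵥ x) s + ρ * (w ⬝ᵥ x) := by
  set k := ρ / (1 - β - ρ) * (w ⬝ᵥ b) with hk
  obtain rfl : x = b + fun _ => k := funext hx
  have hPk : (P *ᵥ fun _ => k) s = k := by simp [mulVec, dotProduct, ← sum_mul, hP]
  have hwk : w ⬝ᵥ (fun _ => k) = k := by simp [dotProduct, ← sum_mul, hw]
  have hne : 1 - β - ρ ≠ 0 := fun h => hβρ (by linarith)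
  have hk' : k * (1 - β - ρ) = ρ * (w ⬝ᵥ b) := by
    rw [hk]; field_simp
  rw [mulVec_add, dotProduct_add, Pi.add_apply, Pi.add_apply, hPk, hwk]
  linear_combination hb s + hk'

end RankOneUpdate

noncomputable def robustQ {S A : Type*} [Fintype S] (c : S → A → ℝ) (γ R : ℝ)
    (p : S → A → S → ℝ) (σ : ℝ) (V : S → ℝ) (s : S) (a : A) : ℝ :=
  c s a + γ * (1 - R) * ∑ s', p s a s' * V s' + γ * R * lse σ V

noncomputable def robustBellman {S A : Type*} [Fintype S] [Fintype A] (c : S → A → ℝ)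
    (γ R : ℝ) (p : S → A → S → ℝ) (σ : ℝ) (π : S → A → ℝ) (V : S → ℝ) (s : S) : ℝ :=
  ∑ a, π s a * robustQ c γ R p σ V s a

noncomputable def robustBellmanDeriv {S A : Type*} [Fintype S] [Fintype A] (γ R : ℝ)
    (p : S → A → S → ℝ) (σ : ℝ) (π : S → A → ℝ) (V : S → ℝ) : (S → ℝ) →L[ℝ] (S → ℝ) :=
  ContinuousLinearMap.pi fun s => ∑ a, π s a •
    ((γ * (1 - R)) • ∑ s', p s a s' • (ContinuousLinearMap.proj s' : (S → ℝ) →L[ℝ] ℝ)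
      + (γ * R) • ∑ s', softmax σ V s' • (ContinuousLinearMap.proj s' : (S → ℝ) →L[ℝ] ℝ))

section RobustBellman

variable {S A : Type*} [Fintype S] {c : S → A → ℝ} {γ R : ℝ} {p : S → A → S → ℝ} {σ : ℝ}

lemma abs_robustQ_sub_le [Nonempty S] (hp : ∀ s a, p s a ∈ stdSimplex ℝ S) (hγ : 0 ≤ γ)
    (hR : R ∈ Set.Icc (0 : ℝ) 1) (hσ : 0 < σ) (V W : S → ℝ) (s : S) (a : A) :
    |robustQ c γ R p σ V s a - robustQ c γ R p σ W s a| ≤ γ * ‖V - W‖ := by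
  have hP : |∑ s', p s a s' * (V - W) s'| ≤ ‖V - W‖ :=
    abs_sum_mul_le_of_mem_stdSimplex (hp s a) fun s' => by
      simpa only [Real.norm_eq_abs] using norm_le_pi_norm (V - W) s'
  have hL : |lse σ V - lse σ W| ≤ ‖V - W‖ := by
    simpa [dist_eq_norm, Real.dist_eq] using (lipschitzWith_lse hσ).dist_le_mul V W
  have hdiff : robustQ c γ R p σ V s a - robustQ c γ R p σ W s a
      = γ * (1 - R) * ∑ s', p s a s' * (V - W) s' + γ * R * (lse σ V - lse σ W) := by
    simp only [robustQ, Pi.sub_apply, mul_sub, sum_sub_distrib]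
    ring
  have h1R : 0 ≤ 1 - R := sub_nonneg.2 hR.2
  have h0R : 0 ≤ R := hR.1
  calc _ ≤ γ * (1 - R) * ‖V - W‖ + γ * R * ‖V - W‖ := by
        rw [hdiff]
        refine (abs_add_le _ _).trans (add_le_add ?_ ?_) <;>
          rw [abs_mul, abs_of_nonneg (by positivity)] <;> gcongr
    _ = γ * ‖V - W‖ := by ring

variable [Fintype A]

lemma lipschitzWith_robustBellman [Nonempty S] (hp : ∀ s a, p s a ∈ stdSimplex ℝ S)
    (hγ : 0 ≤ γ) (hR : R ∈ Set.Icc (0 : ℝ) 1) (hσ : 0 < σ) {π : S → A → ℝ}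
    (hπ : ∀ s, π s ∈ stdSimplex ℝ A) :
    LipschitzWith γ.toNNReal (robustBellman c γ R p σ π) := by
  refine LipschitzWith.of_dist_le' fun V W => ?_
  rw [dist_eq_norm, dist_eq_norm]
  refine (pi_norm_le_iff_of_nonneg (by positivity)).2 fun s => ?_
  rw [Real.norm_eq_abs, Pi.sub_apply, robustBellman, robustBellman, ← sum_sub_distrib]
  simp only [← mul_sub]
  exact abs_sum_mul_le_of_mem_stdSimplex (hπ s) (abs_robustQ_sub_le hp hγ hR hσ V W s)

lemma norm_robustBellman_sub_sub_le [Nonempty S] (hp : ∀ s a, p s a ∈ stdSimplex ℝ S)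
    (hγ : 0 ≤ γ) (hR : R ∈ Set.Icc (0 : ℝ) 1) (hσ : 0 < σ) (π π₀ : S → A → ℝ)
    (V W : S → ℝ) :
    ‖robustBellman c γ R p σ π V - robustBellman c γ R p σ π₀ V
        - (robustBellman c γ R p σ π W - robustBellman c γ R p σ π₀ W)‖
      ≤ γ * (∑ s, ∑ a, |π s a - π₀ s a|) * ‖V - W‖ := by
  refine (pi_norm_le_iff_of_nonneg (by positivity)).2 fun s => ?_
  have hsplit : (robustBellman c γ R p σ π V - robustBellman c γ R p σ π₀ V
      - (robustBellman c γ R p σ π W - robustBellman c γ R p σ π₀ W)) s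
      = ∑ a, (π s a - π₀ s a) * (robustQ c γ R p σ V s a - robustQ c γ R p σ W s a) := by
    simp only [robustBellman, Pi.sub_apply, ← sum_sub_distrib]
    exact sum_congr rfl fun a _ => by ring
  rw [hsplit, Real.norm_eq_abs]
  calc _ ≤ ∑ a, |π s a - π₀ s a| * (γ * ‖V - W‖) := by
        refine (abs_sum_le_sum_abs _ _).trans (sum_le_sum fun a _ => ?_)
        rw [abs_mul]
        exact mul_le_mul_of_nonneg_left (abs_robustQ_sub_le hp hγ hR hσ V W s a) (abs_nonneg _)
    _ ≤ (∑ s, ∑ a, |π s a - π₀ s a|) * (γ * ‖V - W‖) := by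
        rw [← sum_mul]
        gcongr
        exact single_le_sum (f := fun s => ∑ a, |π s a - π₀ s a|)
          (fun s _ => sum_nonneg fun a _ => abs_nonneg _) (mem_univ s)
    _ = _ := by ring

lemma hasFDerivAt_robustBellman_policy {E : Type*} [NormedAddCommGroup E] [NormedSpace ℝ E]
    {π : E → S → A → ℝ} {π' : S → A → E →L[ℝ] ℝ} {θ : E}
    (hπ' : ∀ s a, HasFDerivAt (fun θ => π θ s a) (π' s a) θ) (V : S → ℝ) :
    HasFDerivAt (fun θ => robustBellman c γ R p σ (π θ) V)
      (ContinuousLinearMap.pi fun s => ∑ a, robustQ c γ R p σ V s a • π' s a) θ :=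
  hasFDerivAt_pi.2 fun s => HasFDerivAt.fun_sum fun a _ => (hπ' s a).mul_const _

lemma hasFDerivAt_robustBellman [Nonempty S] (hσ : σ ≠ 0) (π : S → A → ℝ) (V : S → ℝ) :
    HasFDerivAt (robustBellman c γ R p σ π) (robustBellmanDeriv γ R p σ π V) V := by
  refine hasFDerivAt_pi.2 fun s => HasFDerivAt.fun_sum fun a _ => HasFDerivAt.const_mul ?_ _
  refine ((HasFDerivAt.fun_sum fun s' _ => ?_).const_mul _).const_add _ |>.add
    ((hasFDerivAt_lse hσ V).const_mul _)
  exact (hasFDerivAt_apply s' V).const_mul (p s a s')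

lemma robustBellmanDeriv_apply {π : S → A → ℝ} (hπ : ∀ s, ∑ a, π s a = 1) (V h : S → ℝ)
    (s : S) :
    robustBellmanDeriv γ R p σ π V h s
      = γ * (1 - R) * (pmat π p *ᵥ h) s + γ * R * (softmax σ V ⬝ᵥ h) := by
  simp [robustBellmanDeriv, pmat, Matrix.mulVec, dotProduct]
  rw [sum_add_distrib, ← sum_mul, hπ, one_mul]
  simp only [mul_sum, sum_mul]
  rw [sum_comm]
  exact congrArg (· + _) (sum_congr rfl fun _ _ => sum_congr rfl fun _ _ => by ring)

end RobustBellman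

section RobustValue

variable {S A : Type*} [Fintype S] [Fintype A] [Nonempty S] {c : S → A → ℝ} {γ R : ℝ}
  {p : S → A → S → ℝ} {σ : ℝ}

theorem hasFDerivAt_robustValue {E : Type*} [NormedAddCommGroup E] [NormedSpace ℝ E]
    (hp : ∀ s a, p s a ∈ stdSimplex ℝ S) (hγ : γ ∈ Set.Ico (0 : ℝ) 1)
    (hR : R ∈ Set.Icc (0 : ℝ) 1) (hσ : 0 < σ) {Θ : Set E} (hΘ : IsOpen Θ)
    {π : E → S → A → ℝ} (hπ : ∀ θ ∈ Θ, ∀ s, π θ s ∈ stdSimplex ℝ A)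
    {π' : S → A → E →L[ℝ] ℝ} {θ : E} (hθ : θ ∈ Θ)
    (hπ' : ∀ s a, HasFDerivAt (fun θ => π θ s a) (π' s a) θ)
    {V : E → S → ℝ} (hV : ∀ θ ∈ Θ, V θ = robustBellman c γ R p σ (π θ) (V θ))
    {f' : E →L[ℝ] (S → ℝ)}
    (hf' : ∀ u s, f' u s = ∑ a, robustQ c γ R p σ (V θ) s a * π' s a u
      + γ * (1 - R) * (pmat (π θ) p *ᵥ f' u) s + γ * R * (softmax σ (V θ) ⬝ᵥ f' u)) :
    HasFDerivAt V f' θ := by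
  have hΘθ : ∀ᶠ θ' in 𝓝 θ, θ' ∈ Θ := hΘ.mem_nhds hθ
  have hε : Tendsto (fun θ' => γ * ∑ s, ∑ a, |π θ' s a - π θ s a|) (𝓝 θ) (𝓝 0) := by
    have hπc := fun s a => (hπ' s a).continuousAt
    have : ContinuousAt (fun θ' => γ * ∑ s, ∑ a, |π θ' s a - π θ s a|) θ := by fun_prop
    simpa using this.tendsto
  refine hasFDerivAt_of_isFixedPt (T := fun θ' => robustBellman c γ R p σ (π θ'))
    (Real.toNNReal_lt_one.2 hγ.2) (hΘθ.mono fun θ' h => (hV θ' h).symm)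
    (hΘθ.mono fun θ' h => lipschitzWith_robustBellman hp hγ.1 hR hσ (hπ θ' h))
    (hasFDerivAt_robustBellman_policy hπ' (V θ)) (hasFDerivAt_robustBellman hσ.ne' (π θ) (V θ))
    hε (Eventually.of_forall fun θ' => norm_robustBellman_sub_sub_le hp hγ.1 hR hσ _ _)
    fun u => ?_
  funext s
  rw [Pi.add_apply, robustBellmanDeriv_apply (fun s => (hπ θ hθ s).2), hf' u s]
  simp [add_assoc]

end RobustValue

theorem stmt_11_general {S A : Type*} [Fintype S] [Fintype A] [Nonempty S] [DecidableEq S]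
    {N : ℕ}
    (c : S → A → ℝ)
    (γ : ℝ) (hγ : γ ∈ Set.Ico (0 : ℝ) 1)
    (R : ℝ) (hR : R ∈ Set.Icc (0 : ℝ) 1)
    (p : S → A → S → ℝ) (hp : ∀ s a, p s a ∈ stdSimplex ℝ S)
    (σ : ℝ) (hσ : 0 < σ)
    (Θ : Set (EuclideanSpace ℝ (Fin N))) (hΘo : IsOpen Θ)
    (π : EuclideanSpace ℝ (Fin N) → S → A → ℝ)
    (hπ : ∀ θ ∈ Θ, ∀ s, π θ s ∈ stdSimplex ℝ A)
    (D : EuclideanSpace ℝ (Fin N) → S → A → EuclideanSpace ℝ (Fin N))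
    (hD : ∀ θ ∈ Θ, ∀ s a, HasGradientAt (fun θ' => π θ' s a) (D θ s a) θ)
    (Vσ : EuclideanSpace ℝ (Fin N) → S → ℝ)
    (hVσ : ∀ θ ∈ Θ, ∀ s, Vσ θ s = ∑ a, π θ s a * (c s a
      + γ * (1 - R) * ∑ s', p s a s' * Vσ θ s'
      + γ * R * lse σ (Vσ θ)))
    (Qσ : EuclideanSpace ℝ (Fin N) → S → A → ℝ)
    (hQσ : ∀ θ ∈ Θ, ∀ s a, Qσ θ s a = c s a + γ * (1 - R) * ∑ s', p s a s' * Vσ θ s'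
      + γ * R * lse σ (Vσ θ))
    (B : S → EuclideanSpace ℝ (Fin N) → EuclideanSpace ℝ (Fin N))
    (hB : ∀ s θ, B s θ = (1 / (1 - γ + γ * R)) •
      ∑ s', ∑ a, (dvisit γ R (π θ) p s s' * Qσ θ s' a) • D θ s' a)
    (θ : EuclideanSpace ℝ (Fin N)) (hθ : θ ∈ Θ) (s : S) :
    HasGradientAt (fun θ' => Vσ θ' s)
      (B s θ + (γ * R / (1 - γ)) •
        ((∑ s', Real.exp (σ * Vσ θ s'))⁻¹ • ∑ s', Real.exp (σ * Vσ θ s') • B s' θ)) θ := by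
  have hβ : |γ * (1 - R)| < 1 := by
    rw [abs_of_nonneg (mul_nonneg hγ.1 (sub_nonneg.2 hR.2))]
    nlinarith [mul_nonneg hγ.1 hR.1, hγ.2]
  set gr : S → EuclideanSpace ℝ (Fin N) := fun x => B x θ + (γ * R / (1 - γ)) •
    ((∑ s', Real.exp (σ * Vσ θ s'))⁻¹ • ∑ s', Real.exp (σ * Vσ θ s') • B s' θ)
  have hBθ : ∀ x, B x θ = (1 / (1 - γ + γ * R)) • ∑ s', ∑ a,
      (dvisit γ R (π θ) p x s' * robustQ c γ R p σ (Vσ θ) s' a) • D θ s' a := fun x => by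
    simp only [hB, hQσ θ hθ, robustQ]
  have hgr : ∀ u x, ⟪gr x, u⟫ = ⟪B x θ, u⟫ + γ * R / (1 - γ * (1 - R) - γ * R) *
      (softmax σ (Vσ θ) ⬝ᵥ fun y => ⟪B y θ, u⟫) := fun u x => by
    simp only [gr, inner_add_left, real_inner_smul_left, sum_inner, softmax, dotProduct, mul_sum,
      mul_assoc]
    ring_nf
  have hf' : ∀ u x, ⟪gr x, u⟫ = ∑ a, robustQ c γ R p σ (Vσ θ) x a * ⟪D θ x a, u⟫
      + γ * (1 - R) * (pmat (π θ) p *ᵥ fun y => ⟪gr y, u⟫) x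
      + γ * R * (softmax σ (Vσ θ) ⬝ᵥ fun y => ⟪gr y, u⟫) := fun u =>
    eq_add_mulVec_add_dotProduct (sum_pmat_apply (hπ θ hθ) hp) (sum_softmax (Vσ θ))
      (by ring_nf; exact hγ.2.ne) (inner_eq_add_mulVec_of_eq_dvisit (hπ θ hθ) hp hβ hBθ u)
      (hgr u)
  have hV := hasFDerivAt_robustValue hp hγ hR hσ hΘo hπ hθ
    (fun x a => (hD θ hθ x a).hasFDerivAt) (fun θ' h => funext (hVσ θ' h))
    (f' := ContinuousLinearMap.pi fun x => InnerProductSpace.toDual ℝ _ (gr x))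
    (fun u x => by simpa using hf' u x)
  rw [hasGradientAt_iff_hasFDerivAt]
  exact (hasFDerivAt_apply s _).comp θ hV

/-- **Gradient of the smoothed robust value function (Theorem 4, value form)**: for a
differentiable policy class on an open `Θ ⊆ ℝ^N`, every `σ > 0`, every `θ ∈ Θ` and `s ∈ S`,
`θ ↦ V_σ^{π_θ}(s)` is differentiable with gradient
`B(s,θ) + (γR/(1-γ))·(∑_{s'} e^{σV_σ(s')}·B(s',θ))/(∑_{s'} e^{σV_σ(s')})`, where
`B(s,θ) = (1/(1-γ+γR))·∑_{s'} d^{π_θ}_s(s')·∑_a ∇π_θ(a|s')·Q_σ^{π_θ}(s',a)`. -/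
theorem stmt_11 {S A : Type*} [Fintype S] [Fintype A] [Nonempty S] [Nonempty A] [DecidableEq S]
    {N : ℕ}
    (c : S → A → ℝ) (hc : ∀ s a, c s a ∈ Set.Icc (0 : ℝ) 1)
    (γ : ℝ) (hγ : γ ∈ Set.Ico (0 : ℝ) 1)
    (R : ℝ) (hR : R ∈ Set.Icc (0 : ℝ) 1)
    (p : S → A → S → ℝ) (hp : ∀ s a, p s a ∈ stdSimplex ℝ S)
    (σ : ℝ) (hσ : 0 < σ)
    (Θ : Set (EuclideanSpace ℝ (Fin N))) (hΘo : IsOpen Θ)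
    (π : EuclideanSpace ℝ (Fin N) → S → A → ℝ)
    (hπ : ∀ θ ∈ Θ, ∀ s, π θ s ∈ stdSimplex ℝ A)
    (D : EuclideanSpace ℝ (Fin N) → S → A → EuclideanSpace ℝ (Fin N))
    (hD : ∀ θ ∈ Θ, ∀ s a, HasGradientAt (fun θ' => π θ' s a) (D θ s a) θ)
    (Vσ : EuclideanSpace ℝ (Fin N) → S → ℝ)
    (hVσ : ∀ θ ∈ Θ, ∀ s, Vσ θ s = ∑ a, π θ s a * (c s a
      + γ * (1 - R) * ∑ s', p s a s' * Vσ θ s'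
      + γ * R * lse σ (Vσ θ)))
    (Qσ : EuclideanSpace ℝ (Fin N) → S → A → ℝ)
    (hQσ : ∀ θ ∈ Θ, ∀ s a, Qσ θ s a = c s a + γ * (1 - R) * ∑ s', p s a s' * Vσ θ s'
      + γ * R * lse σ (Vσ θ))
    (B : S → EuclideanSpace ℝ (Fin N) → EuclideanSpace ℝ (Fin N))
    (hB : ∀ s θ, B s θ = (1 / (1 - γ + γ * R)) •
      ∑ s', ∑ a, (dvisit γ R (π θ) p s s' * Qσ θ s' a) • D θ s' a)
    (θ : EuclideanSpace ℝ (Fin N)) (hθ : θ ∈ Θ) (s : S) :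
    HasGradientAt (fun θ' => Vσ θ' s)
      (B s θ + (γ * R / (1 - γ)) •
        ((∑ s', Real.exp (σ * Vσ θ s'))⁻¹ • ∑ s', Real.exp (σ * Vσ θ s') • B s' θ)) θ :=
  stmt_11_general c γ hγ R hR p hp σ hσ Θ hΘo π hπ D hD Vσ hVσ Qσ hQσ B hB θ hθ s
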